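/- arXiv:2107.07639 — 5 statements merged into one kernel-verified Lean document; each statement's English description precedes it below -/
import Mathlib

section
/- Let ℓ be a rational prime and let P(X) ∈ ℚ[X] be an integer-valued polynomial of degree d ≥ 1. Then the induced function P : ℤ → ℤ is Lipschitz for the ℓ-adic metric with explicit constant: |P(m) − P(n)|_ℓ ≤ ℓ^{⌊log_ℓ d⌋} · |m − n|_ℓ for all m, n ∈ ℤ. -/
open Polynomial Finset

private lemma my_fwdDiff_eval (P : ℚ[X]) :
    fwdDiff (1:ℚ) (fun y : ℚ => P.eval y) = fun y => (P.comp (X + C 1) - P).eval y := by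
  funext y
  simp [fwdDiff, eval_comp]

private lemma my_zero_iter (k : ℕ) : (fwdDiff (1:ℚ))^[k] (fun _ : ℚ => (0:ℚ)) = fun _ => 0 := by
  induction k with
  | zero => rfl
  | succ k ih =>
      rw [Function.iterate_succ_apply,
        show fwdDiff (1:ℚ) (fun _ : ℚ => (0:ℚ)) = fun _ => (0:ℚ) from funext fun y => sub_self 0,
        ih]

private lemma my_iter_vanish : ∀ (k : ℕ) (P : ℚ[X]), P.natDegree < k →
    (fwdDiff (1:ℚ))^[k] (fun y : ℚ => P.eval y) = fun _ => 0 := by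
  intro k
  induction k with
  | zero => intro P h; exact absurd h (Nat.not_lt_zero _)
  | succ k ih =>
    intro P h
    rw [Function.iterate_succ_apply, my_fwdDiff_eval]
    set Q := P.comp (X + C 1) - P with hQ
    rcases eq_or_ne Q 0 with h0 | h0
    · rw [h0]; simpa using my_zero_iter k
    · apply ih
      rcases Nat.eq_zero_or_pos P.natDegree with hd0 | hd1
      · obtain ⟨a, rfl⟩ := natDegree_eq_zero.mp hd0
        exact absurd (by simp [hQ]) h0
      · have hP : P ≠ 0 := fun hz => by simp [hz] at hd1
        have hcompdeg : (P.comp (X + C 1)).natDegree = P.natDegree := by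
          rw [← taylor_apply, natDegree_taylor]
        have hcomp0 : P.comp (X + C 1) ≠ 0 := fun hz => by
          rw [hz] at hcompdeg; simp at hcompdeg; omega
        have hlc : (P.comp (X + C 1)).leadingCoeff = P.leadingCoeff := by
          rw [leadingCoeff_comp (by rw [natDegree_X_add_C]; exact one_ne_zero),
            leadingCoeff_X_add_C, one_pow, mul_one]
        have hdeq : (P.comp (X + C 1)).degree = P.degree := by
          rw [degree_eq_natDegree hcomp0, degree_eq_natDegree hP, hcompdeg]
        have hlt := degree_sub_lt hdeq hcomp0 hlc
        have h2 : Q.natDegree < P.natDegree := by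
          have := natDegree_lt_natDegree h0 hlt
          omega
        omega

private lemma my_c_int (P : ℚ[X]) (hint : ∀ n : ℤ, ∃ z : ℤ, P.eval (n : ℚ) = (z : ℚ))
    (n : ℤ) (k : ℕ) :
    ∃ z : ℤ, (fwdDiff (1:ℚ))^[k] (fun y : ℚ => P.eval y) (n:ℚ) = (z : ℚ) := by
  choose zf hzf using hint
  refine ⟨∑ j ∈ range (k+1), (-1)^(k-j) * (k.choose j : ℤ) * zf (n + j), ?_⟩
  rw [fwdDiff_iter_eq_sum_shift]
  push_cast
  refine Finset.sum_congr rfl fun j hj => ?_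
  have h1 : (n:ℚ) + j • (1:ℚ) = ((n + j : ℤ) : ℚ) := by push_cast [nsmul_eq_mul]; ring
  rw [zsmul_eq_mul, h1, hzf]
  push_cast
  ring

private lemma my_binom_int (t : ℤ) (k : ℕ) :
    ∃ z : ℤ, (descPochhammer ℚ k).eval ((t:ℚ)) * ((k.factorial : ℚ))⁻¹ = (z : ℚ) := by
  refine ⟨Ring.choose t k, ?_⟩
  have h1 : (((descPochhammer ℤ k).eval t : ℤ) : ℚ) = (descPochhammer ℚ k).eval ((t:ℤ):ℚ) :=
    descPochhammer_eval_cast (R := ℚ) k t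
  have h2 : (descPochhammer ℤ k).eval t = (k.factorial : ℤ) * Ring.choose t k := by
    rw [Polynomial.eval_eq_smeval, Ring.descPochhammer_eq_factorial_smul_choose]
    simp [nsmul_eq_mul]
  have hfac : ((k.factorial : ℚ)) ≠ 0 := by positivity
  rw [← h1, h2]
  push_cast
  field_simp

private lemma my_newton (P : ℚ[X]) (n : ℤ) (s : ℚ) :
    P.eval ((n:ℚ) + s) = ∑ k ∈ range (P.natDegree + 1),
      ((fwdDiff (1:ℚ))^[k] (fun y : ℚ => P.eval y) (n:ℚ)) * ((k.factorial : ℚ))⁻¹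
        * (descPochhammer ℚ k).eval s := by
  set f : ℚ → ℚ := fun y => P.eval y with hfdef
  set c : ℕ → ℚ := fun k => (fwdDiff (1:ℚ))^[k] f (n:ℚ) with hc
  have key : P.comp (C (n:ℚ) + X) = ∑ k ∈ range (P.natDegree + 1),
      C (c k * (k.factorial : ℚ)⁻¹) * descPochhammer ℚ k := by
    apply eq_of_infinite_eval_eq
    apply Set.infinite_of_injective_forall_mem (f := (Nat.cast : ℕ → ℚ)) Nat.cast_injective
    intro t
    simp only [Set.mem_setOf_eq, eval_comp, eval_add, eval_C, eval_X, eval_finset_sum, eval_mul]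
    have GN := shift_eq_sum_fwdDiff_iter (1:ℚ) f t (n:ℚ)
    have hsm : (n:ℚ) + t • (1:ℚ) = (n:ℚ) + t := by rw [nsmul_eq_mul, mul_one]
    rw [hsm] at GN
    set N := max (t+1) (P.natDegree+1) with hN
    have hL : ∑ k ∈ range (t+1), t.choose k • c k = ∑ k ∈ range N, t.choose k • c k := by
      apply Finset.sum_subset (range_subset_range.2 (le_max_left _ _))
      intro k _ hk
      have ht : t < k := by simp only [mem_range] at hk; omega
      rw [Nat.choose_eq_zero_of_lt ht, zero_smul]
    have hR : ∑ k ∈ range (P.natDegree+1),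
          c k * (k.factorial:ℚ)⁻¹ * (descPochhammer ℚ k).eval (t:ℚ)
        = ∑ k ∈ range N, c k * (k.factorial:ℚ)⁻¹ * (descPochhammer ℚ k).eval (t:ℚ) := by
      apply Finset.sum_subset (range_subset_range.2 (le_max_right _ _))
      intro k _ hk
      have hk' : P.natDegree < k := by simp only [mem_range] at hk; omega
      have hv := my_iter_vanish k P hk'
      have hz : c k = 0 := by
        have := congrFun hv (n:ℚ)
        simpa [hc, hfdef] using this
      rw [hz]; ring
    calc eval ((n:ℚ)+(t:ℚ)) P = f ((n:ℚ)+(t:ℚ)) := rfl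
    _ = ∑ k ∈ range (t+1), t.choose k • c k := GN
    _ = ∑ k ∈ range N, t.choose k • c k := hL
    _ = ∑ k ∈ range N, c k * (k.factorial:ℚ)⁻¹ * (descPochhammer ℚ k).eval (t:ℚ) := by
        apply Finset.sum_congr rfl
        intro k _
        rw [descPochhammer_eval_eq_descFactorial, Nat.descFactorial_eq_factorial_mul_choose,
          nsmul_eq_mul]
        have hfac : (k.factorial : ℚ) ≠ 0 := by positivity
        push_cast
        field_simp
    _ = ∑ k ∈ range (P.natDegree+1),
          c k * (k.factorial:ℚ)⁻¹ * (descPochhammer ℚ k).eval (t:ℚ) := hR.symm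
  have hkey := congrArg (eval s) key
  simpa [eval_comp, eval_finset_sum] using hkey

private lemma my_inv_nat_bound (ℓ : ℕ) (hℓ : ℓ.Prime) (d k : ℕ) (hk : k ≠ 0) (hkd : k ≤ d) :
    padicNorm ℓ ((k:ℚ))⁻¹ ≤ (ℓ : ℚ) ^ (Nat.log ℓ d) := by
  haveI : Fact ℓ.Prime := ⟨hℓ⟩
  have hk0 : (k:ℚ) ≠ 0 := Nat.cast_ne_zero.mpr hk
  have h1 : padicNorm ℓ ((k:ℚ))⁻¹ = (ℓ : ℚ) ^ (padicValNat ℓ k : ℤ) := by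
    rw [show ((k:ℚ))⁻¹ = 1 / (k:ℚ) from (one_div _).symm, padicNorm.div,
      padicNorm.one, padicNorm.eq_zpow_of_nonzero hk0, padicValRat.of_nat]
    rw [one_div, ← zpow_neg, neg_neg]
  rw [h1, show ((padicValNat ℓ k : ℤ)) = ((padicValNat ℓ k : ℕ) : ℤ) from rfl, zpow_natCast]
  have hle : padicValNat ℓ k ≤ Nat.log ℓ d :=
    le_trans (padicValNat_le_nat_log k) (Nat.log_mono_right hkd)
  exact pow_le_pow_right₀ (by exact_mod_cast hℓ.one_lt.le) hle

/-- Let `ℓ` be a rational prime and `P(X) ∈ ℚ[X]` an integer-valued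
polynomial of degree `d ≥ 1`.  Then the induced function `P : ℤ → ℤ` is Lipschitz for the
`ℓ`-adic metric with explicit constant:
`|P(m) − P(n)|_ℓ ≤ ℓ^{⌊log_ℓ d⌋} · |m − n|_ℓ` for all `m, n ∈ ℤ`. -/
theorem stmt0 (ℓ : ℕ) (hℓ : ℓ.Prime) (P : Polynomial ℚ)
    (hint : ∀ n : ℤ, ∃ z : ℤ, P.eval (n : ℚ) = (z : ℚ))
    (hdeg : 1 ≤ P.natDegree) :
    ∀ m n : ℤ, padicNorm ℓ (P.eval (m : ℚ) - P.eval (n : ℚ)) ≤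
      (ℓ : ℚ) ^ (Nat.log ℓ P.natDegree) * padicNorm ℓ ((m : ℚ) - (n : ℚ)) := by
  haveI : Fact ℓ.Prime := ⟨hℓ⟩
  intro m n
  set d := P.natDegree with hd
  set L := Nat.log ℓ d with hLdef
  set c : ℕ → ℚ := fun k => (fwdDiff (1:ℚ))^[k] (fun y : ℚ => P.eval y) (n:ℚ) with hc
  have hN := my_newton P n ((m - n : ℤ) : ℚ)
  have hm : (n:ℚ) + ((m - n : ℤ):ℚ) = (m:ℚ) := by push_cast; ring
  rw [hm, Finset.sum_range_succ'] at hN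
  have h00 : c 0 * ((Nat.factorial 0 : ℚ))⁻¹ * (descPochhammer ℚ 0).eval ((m-n:ℤ):ℚ)
      = P.eval (n:ℚ) := by
    simp [hc, descPochhammer_zero]
  have hdiff : P.eval (m:ℚ) - P.eval (n:ℚ)
      = ∑ k ∈ range d, c (k+1) * ((Nat.factorial (k+1) : ℚ))⁻¹
          * (descPochhammer ℚ (k+1)).eval ((m-n:ℤ):ℚ) := by
    rw [hN]
    rw [show ((fwdDiff (1:ℚ))^[0] (fun y : ℚ => P.eval y) (n:ℚ)) * ((Nat.factorial 0 : ℚ))⁻¹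
        * (descPochhammer ℚ 0).eval ((m-n:ℤ):ℚ) = P.eval (n:ℚ) from h00]
    ring
  have hcast : ((m:ℚ) - (n:ℚ)) = ((m-n:ℤ):ℚ) := by push_cast; ring
  rw [hdiff, hcast]
  apply padicNorm.sum_le'
  · intro k hk
    have hk1 : k + 1 ≤ d := by simp only [mem_range] at hk; omega
    have hdesc : (descPochhammer ℚ (k+1)).eval ((m-n:ℤ):ℚ)
        = ((m-n:ℤ):ℚ) * (descPochhammer ℚ k).eval (((m-n-1:ℤ)):ℚ) := by
      rw [descPochhammer_succ_left]
      simp only [eval_mul, eval_X, eval_comp, eval_sub, eval_add, eval_neg, eval_one]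
      push_cast
      ring
    have hfac : ((Nat.factorial (k+1) : ℚ))⁻¹
        = (((k+1 : ℕ)):ℚ)⁻¹ * ((Nat.factorial k : ℚ))⁻¹ := by
      rw [Nat.factorial_succ]; push_cast; rw [mul_inv]
    have hterm : c (k+1) * ((Nat.factorial (k+1) : ℚ))⁻¹
          * (descPochhammer ℚ (k+1)).eval ((m-n:ℤ):ℚ)
        = c (k+1) * (((k+1:ℕ)):ℚ)⁻¹ * ((m-n:ℤ):ℚ)
          * ((descPochhammer ℚ k).eval (((m-n-1:ℤ)):ℚ) * ((Nat.factorial k : ℚ))⁻¹) := by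
      rw [hdesc, hfac]; ring
    rw [hterm]
    obtain ⟨z1, hz1⟩ := my_c_int P hint n (k+1)
    obtain ⟨z4, hz4⟩ := my_binom_int (m - n - 1) k
    have b1 : padicNorm ℓ (c (k+1)) ≤ 1 := by
      rw [hc]; simp only; rw [hz1]; exact padicNorm.of_int z1
    have b2 : padicNorm ℓ ((((k+1:ℕ)):ℚ))⁻¹ ≤ (ℓ:ℚ) ^ L :=
      my_inv_nat_bound ℓ hℓ d (k+1) (Nat.succ_ne_zero k) hk1
    have b4 : padicNorm ℓ ((descPochhammer ℚ k).eval (((m-n-1:ℤ)):ℚ)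
        * ((Nat.factorial k : ℚ))⁻¹) ≤ 1 := by
      rw [hz4]; exact padicNorm.of_int z4
    have hmuls : padicNorm ℓ (c (k+1) * (((k+1:ℕ)):ℚ)⁻¹ * ((m-n:ℤ):ℚ)
          * ((descPochhammer ℚ k).eval (((m-n-1:ℤ)):ℚ) * ((Nat.factorial k : ℚ))⁻¹))
        = padicNorm ℓ (c (k+1)) * padicNorm ℓ ((((k+1:ℕ)):ℚ))⁻¹
          * padicNorm ℓ ((m-n:ℤ):ℚ)
          * padicNorm ℓ ((descPochhammer ℚ k).eval (((m-n-1:ℤ)):ℚ)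
              * ((Nat.factorial k : ℚ))⁻¹) := by
      rw [padicNorm.mul, padicNorm.mul, padicNorm.mul]
    rw [hmuls]
    have n1 := padicNorm.nonneg (p := ℓ) (c (k+1))
    have n2 := padicNorm.nonneg (p := ℓ) ((((k+1:ℕ)):ℚ))⁻¹
    have n3 := padicNorm.nonneg (p := ℓ) ((m-n:ℤ):ℚ)
    have n4 := padicNorm.nonneg (p := ℓ) ((descPochhammer ℚ k).eval (((m-n-1:ℤ)):ℚ)
        * ((Nat.factorial k : ℚ))⁻¹)
    have hLpos : (0:ℚ) ≤ (ℓ:ℚ) ^ L := by positivity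
    calc padicNorm ℓ (c (k+1)) * padicNorm ℓ ((((k+1:ℕ)):ℚ))⁻¹
          * padicNorm ℓ ((m-n:ℤ):ℚ)
          * padicNorm ℓ ((descPochhammer ℚ k).eval (((m-n-1:ℤ)):ℚ)
              * ((Nat.factorial k : ℚ))⁻¹)
        ≤ 1 * ((ℓ:ℚ) ^ L) * padicNorm ℓ ((m-n:ℤ):ℚ) * 1 := by
          refine mul_le_mul ?_ b4 n4 (mul_nonneg (mul_nonneg (by positivity) hLpos) n3)
          exact mul_le_mul_of_nonneg_right (mul_le_mul b1 b2 n2 zero_le_one) n3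
    _ = (ℓ:ℚ) ^ L * padicNorm ℓ ((m-n:ℤ):ℚ) := by ring
  · exact mul_nonneg (by positivity) (padicNorm.nonneg _)
end

section
/- Let ℓ be a rational prime and let P(X) ∈ ℚ[X] be an integer-valued polynomial of degree d ≥ 1. Then for all m, n ∈ ℤ one has |P(m) − P(n)|_ℓ ≤ ℓ^{d} · |m − n|_ℓ; equivalently, if P(m) ≠ P(n) then ord_ℓ(P(m) − P(n)) ≥ ord_ℓ(m − n) − d. -/
open Polynomial Finset Nat

open Polynomial Finset Nat

lemma prod_lower (i : ℕ) : ∏ j ∈ Finset.range i, ((i : ℚ) - (j : ℚ)) = (i ! : ℚ) := by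
  have h1 : ∀ j ∈ Finset.range i, ((i : ℚ) - (j : ℚ)) = ((i - j : ℕ) : ℚ) := by
    intro j hj
    rw [Nat.cast_sub (le_of_lt (Finset.mem_range.mp hj))]
  rw [Finset.prod_congr rfl h1]
  have := Finset.prod_range_reflect (fun j => ((j + 1 : ℕ) : ℚ)) i
  have h2 : ∀ j ∈ Finset.range i, ((i - j : ℕ) : ℚ) = ((i - 1 - j + 1 : ℕ) : ℚ) := by
    intro j hj
    congr 1
    have := Finset.mem_range.mp hj
    omega
  rw [Finset.prod_congr rfl h2, this]
  push_cast
  exact_mod_cast Finset.prod_range_add_one_eq_factorial i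

lemma prod_upper {i d : ℕ} (h : i ≤ d) :
    ∏ j ∈ Finset.Ico (i+1) (d+1), ((i : ℚ) - (j : ℚ)) = (-1) ^ (d - i) * ((d - i)! : ℚ) := by
  rw [Finset.prod_Ico_eq_prod_range]
  have h1 : ∀ k ∈ Finset.range (d + 1 - (i + 1)), ((i : ℚ) - ((i + 1 + k : ℕ) : ℚ))
      = (-1) * ((k + 1 : ℕ) : ℚ) := by
    intro k _
    push_cast
    ring
  rw [Finset.prod_congr rfl h1, Finset.prod_mul_distrib, Finset.prod_const]
  have : d + 1 - (i + 1) = d - i := by omega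
  rw [this, Finset.card_range]
  congr 1
  exact_mod_cast Finset.prod_range_add_one_eq_factorial (d - i)

lemma erase_split {i d : ℕ} (h : i ≤ d) :
    (Finset.range (d+1)).erase i = Finset.range i ∪ Finset.Ico (i+1) (d+1) := by
  ext a
  simp only [Finset.mem_erase, Finset.mem_range, Finset.mem_union, Finset.mem_Ico]
  omega

lemma prod_erase_eval {i d : ℕ} (h : i ≤ d) :
    ∏ j ∈ (Finset.range (d+1)).erase i, ((i : ℚ) - (j : ℚ))
      = (-1) ^ (d - i) * (i ! : ℚ) * ((d - i)! : ℚ) := by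
  rw [erase_split h, Finset.prod_union (by
    rw [Finset.disjoint_left]
    intro a ha hb
    have := Finset.mem_range.mp ha
    have := (Finset.mem_Ico.mp hb).1
    omega)]
  rw [prod_lower, prod_upper h]
  ring

lemma lagrange_id (P : ℚ[X]) (d : ℕ) (hd : P.natDegree ≤ d) :
    Polynomial.C (d ! : ℚ) * P = ∑ i ∈ Finset.range (d+1),
      Polynomial.C ((-1)^(d-i) * (d.choose i : ℚ) * P.eval (i : ℚ)) *
        ∏ j ∈ (Finset.range (d+1)).erase i, (Polynomial.X - Polynomial.C (j : ℚ)) := by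
  have hCmul : ∀ (a : ℚ) (p : Polynomial ℚ), (Polynomial.C a * p).degree ≤ p.degree := fun a p =>
    le_trans (Polynomial.degree_mul_le _ _)
      (by simpa using add_le_add_left (Polynomial.degree_C_le (a := a)) p.degree)
  apply Polynomial.eq_of_degrees_lt_of_eval_index_eq (v := (Nat.cast : ℕ → ℚ))
    (Finset.range (d+1))
  · exact fun a _ b _ hab => Nat.cast_injective hab
  · rw [Finset.card_range]
    calc (Polynomial.C (d ! : ℚ) * P).degree ≤ P.degree := hCmul _ _
    _ ≤ (d : WithBot ℕ) := le_trans (Polynomial.degree_le_natDegree) (by exact_mod_cast hd)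
    _ < ((d + 1 : ℕ) : WithBot ℕ) := by exact_mod_cast Nat.lt_succ_self d
  · rw [Finset.card_range]
    refine lt_of_le_of_lt (Polynomial.degree_sum_le _ _) ?_
    rw [Finset.sup_lt_iff (by exact_mod_cast WithBot.bot_lt_coe (d+1))]
    intro i hi
    calc (Polynomial.C _ * ∏ j ∈ (Finset.range (d+1)).erase i,
            (Polynomial.X - Polynomial.C (j : ℚ))).degree
        ≤ (∏ j ∈ (Finset.range (d+1)).erase i,
            (Polynomial.X - Polynomial.C (j : ℚ))).degree := hCmul _ _
      _ = ∑ j ∈ (Finset.range (d+1)).erase i, (Polynomial.X - Polynomial.C ((j : ℚ))).degree :=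
          Polynomial.degree_prod _ _
      _ = ∑ j ∈ (Finset.range (d+1)).erase i, 1 := by
          apply Finset.sum_congr rfl; intro j _; exact Polynomial.degree_X_sub_C _
      _ < _ := by
          rw [Finset.sum_const, Finset.card_erase_of_mem hi, Finset.card_range]
          simp only [nsmul_eq_mul, mul_one]
          exact_mod_cast Nat.lt_succ_self d
  · intro k hk
    have hkd : k ≤ d := Nat.lt_succ_iff.mp (Finset.mem_range.mp hk)
    rw [Polynomial.eval_mul, Polynomial.eval_C, Polynomial.eval_finset_sum]
    rw [Finset.sum_eq_single k]
    · rw [Polynomial.eval_mul, Polynomial.eval_C, Polynomial.eval_prod]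
      simp only [Polynomial.eval_sub, Polynomial.eval_X, Polynomial.eval_C]
      rw [prod_erase_eval hkd]
      have hch : (d.choose k : ℚ) * (k ! : ℚ) * ((d - k)! : ℚ) = (d ! : ℚ) := by
        exact_mod_cast congrArg (Nat.cast : ℕ → ℚ)
          (Nat.choose_mul_factorial_mul_factorial hkd)
      have hsq : ((-1 : ℚ))^(d-k) * (-1 : ℚ)^(d-k) = 1 := by
        rw [← pow_add]; exact (neg_one_pow_eq_one_iff_even (by norm_num)).mpr (Even.add_self _)
      have hre : (-1:ℚ) ^ (d-k) * (d.choose k : ℚ) * P.eval (k:ℚ) *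
          ((-1:ℚ) ^ (d-k) * (k ! : ℚ) * ((d-k)! : ℚ))
          = ((-1:ℚ) ^ (d-k) * (-1:ℚ) ^ (d-k)) *
            ((d.choose k : ℚ) * (k ! : ℚ) * ((d-k)! : ℚ) * P.eval (k:ℚ)) := by ring
      rw [hre, hsq, hch, one_mul]
    · intro i hi hik
      rw [Polynomial.eval_mul, Polynomial.eval_prod]
      have hmem : k ∈ (Finset.range (d+1)).erase i := Finset.mem_erase.mpr ⟨Ne.symm hik, hk⟩
      rw [Finset.prod_eq_zero hmem (by simp), mul_zero]
    · intro h; exact absurd hk h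

lemma key_dvd (P : Polynomial ℚ) (hint : ∀ n : ℤ, ∃ z : ℤ, P.eval (n : ℚ) = (z : ℚ))
    (m n zm zn : ℤ) (hm : P.eval (m : ℚ) = (zm : ℚ)) (hn : P.eval (n : ℚ) = (zn : ℚ)) :
    (m - n) ∣ ((P.natDegree)! : ℤ) * (zm - zn) := by
  set d := P.natDegree with hdd
  let z : ℕ → ℤ := fun i => (hint i).choose
  have hz : ∀ i : ℕ, P.eval (i : ℚ) = (z i : ℚ) := by
    intro i
    have := (hint (i : ℤ)).choose_spec
    exact_mod_cast this
  let c : ℕ → ℤ := fun i => (-1)^(d-i) * (d.choose i) * z i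
  let R : ℕ → Polynomial ℤ := fun i =>
    ∏ j ∈ (Finset.range (d+1)).erase i, (Polynomial.X - Polynomial.C (j : ℤ))
  have hval : ∀ x : ℤ, (d ! : ℚ) * P.eval (x : ℚ)
      = ∑ i ∈ Finset.range (d+1), (c i : ℚ) * (((R i).eval x : ℤ) : ℚ) := by
    intro x
    have hid := congrArg (Polynomial.eval (x : ℚ)) (lagrange_id P d le_rfl)
    rw [Polynomial.eval_mul, Polynomial.eval_C, Polynomial.eval_finset_sum] at hid
    rw [hid]
    apply Finset.sum_congr rfl
    intro i _
    rw [Polynomial.eval_mul, Polynomial.eval_C, Polynomial.eval_prod]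
    simp only [Polynomial.eval_sub, Polynomial.eval_X, Polynomial.eval_C]
    have hR : (((R i).eval x : ℤ) : ℚ)
        = ∏ j ∈ (Finset.range (d+1)).erase i, ((x : ℚ) - (j : ℚ)) := by
      show ((Polynomial.eval x (∏ j ∈ (Finset.range (d+1)).erase i,
        (Polynomial.X - Polynomial.C (j : ℤ))) : ℤ) : ℚ) = _
      rw [Polynomial.eval_prod, Int.cast_prod]
      apply Finset.prod_congr rfl
      intro j _
      rw [Polynomial.eval_sub, Polynomial.eval_X, Polynomial.eval_C]
      push_cast
      ring
    rw [hR, hz i]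
    show _ = (((-1)^(d-i) * (d.choose i) * z i : ℤ) : ℚ) * _
    push_cast
    ring
  have hcast : (((d ! : ℤ) * (zm - zn) : ℤ) : ℚ)
      = ((∑ i ∈ Finset.range (d+1), c i * ((R i).eval m - (R i).eval n) : ℤ) : ℚ) := by
    push_cast
    have h1 := hval m
    have h2 := hval n
    rw [hm] at h1
    rw [hn] at h2
    rw [mul_sub, h1, h2, ← Finset.sum_sub_distrib]
    exact Finset.sum_congr rfl (fun i _ => by ring)
  have heq : (d ! : ℤ) * (zm - zn)
      = ∑ i ∈ Finset.range (d+1), c i * ((R i).eval m - (R i).eval n) :=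
    Int.cast_injective hcast
  rw [heq]
  apply Finset.dvd_sum
  intro i _
  exact Dvd.dvd.mul_left (Polynomial.sub_dvd_eval_sub m n (R i)) (c i)

lemma padicValNat_factorial_le' (ℓ d : ℕ) (hℓ : ℓ.Prime) : padicValNat ℓ (d !) ≤ d := by
  haveI : Fact ℓ.Prime := ⟨hℓ⟩
  have h1 := Nat.Prime.emultiplicity_factorial_le_div_pred hℓ d
  rw [← padicValNat_eq_emultiplicity (Nat.factorial_pos d).ne'] at h1
  have h2 : padicValNat ℓ (d !) ≤ d / (ℓ - 1) := by exact_mod_cast h1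
  exact le_trans h2 (Nat.div_le_self _ _)



/-- Let `ℓ` be a rational prime and `P(X) ∈ ℚ[X]` an integer-valued
polynomial of degree `d ≥ 1`.  Then for all `m, n ∈ ℤ` one has
`|P(m) − P(n)|_ℓ ≤ ℓ^d · |m − n|_ℓ`; equivalently, if `P(m) ≠ P(n)` then
`ord_ℓ(P(m) − P(n)) ≥ ord_ℓ(m − n) − d`. -/
theorem stmt1 (ℓ : ℕ) (hℓ : ℓ.Prime) (P : Polynomial ℚ)
    (hint : ∀ n : ℤ, ∃ z : ℤ, P.eval (n : ℚ) = (z : ℚ))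
    (hdeg : 1 ≤ P.natDegree) (m n : ℤ) :
    padicNorm ℓ (P.eval (m : ℚ) - P.eval (n : ℚ)) ≤
      (ℓ : ℚ) ^ P.natDegree * padicNorm ℓ ((m : ℚ) - (n : ℚ)) ∧
    (P.eval (m : ℚ) ≠ P.eval (n : ℚ) →
      padicValRat ℓ ((m : ℚ) - (n : ℚ)) - (P.natDegree : ℤ) ≤
        padicValRat ℓ (P.eval (m : ℚ) - P.eval (n : ℚ))) := by
  haveI : Fact ℓ.Prime := ⟨hℓ⟩
  set d := P.natDegree with hdd
  obtain ⟨zm, hPm⟩ := hint m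
  obtain ⟨zn, hPn⟩ := hint n
  have hePQ : P.eval (m : ℚ) - P.eval (n : ℚ) = ((zm - zn : ℤ) : ℚ) := by
    rw [hPm, hPn]; push_cast; ring
  have hMN : (m : ℚ) - (n : ℚ) = ((m - n : ℤ) : ℚ) := by push_cast; ring
  by_cases hw : zm = zn
  · have h0 : P.eval (m : ℚ) - P.eval (n : ℚ) = 0 := by rw [hePQ, hw]; simp
    constructor
    · rw [h0, padicNorm.zero]
      exact mul_nonneg (pow_nonneg (by positivity) _) (padicNorm.nonneg _)
    · intro hne
      exact absurd (by rw [← sub_eq_zero]; exact h0) hne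
  · -- zm ≠ zn, so P(m) ≠ P(n) and m ≠ n
    have hwne : zm - zn ≠ 0 := sub_ne_zero_of_ne hw
    have hmn : m ≠ n := by
      rintro rfl
      exact hw (by exact_mod_cast hPm.symm.trans hPn)
    have hune : m - n ≠ 0 := sub_ne_zero_of_ne hmn
    -- valuation inequality
    have hdvd := key_dvd P hint m n zm zn hPm hPn
    obtain ⟨t, ht⟩ := hdvd
    have hfne : ((d ! : ℤ)) ≠ 0 := by exact_mod_cast (Nat.factorial_pos d).ne'
    have htne : t ≠ 0 := by
      rintro rfl
      rw [mul_zero] at ht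
      exact mul_ne_zero hfne hwne ht
    have hv1 : padicValInt ℓ ((d ! : ℤ) * (zm - zn))
        = padicValNat ℓ (d !) + padicValInt ℓ (zm - zn) := by
      rw [padicValInt.mul hfne hwne, padicValInt.of_nat]
    have hv2 : padicValInt ℓ ((d ! : ℤ) * (zm - zn))
        = padicValInt ℓ (m - n) + padicValInt ℓ t := by
      rw [ht, padicValInt.mul hune htne]
    have hv3 : padicValInt ℓ (m - n) ≤ padicValNat ℓ (d !) + padicValInt ℓ (zm - zn) := by
      rw [← hv1, hv2]; exact Nat.le_add_right _ _
    have hfd := padicValNat_factorial_le' ℓ d hℓ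
    have hkey : padicValRat ℓ ((m : ℚ) - (n : ℚ)) - (d : ℤ)
        ≤ padicValRat ℓ (P.eval (m : ℚ) - P.eval (n : ℚ)) := by
      rw [hePQ, hMN, padicValRat.of_int, padicValRat.of_int]
      push_cast
      omega
    refine ⟨?_, fun _ => hkey⟩
    -- norm inequality
    have hq1 : P.eval (m : ℚ) - P.eval (n : ℚ) ≠ 0 := by
      rw [hePQ]; exact_mod_cast hwne
    have hq2 : (m : ℚ) - (n : ℚ) ≠ 0 := by
      rw [hMN]; exact_mod_cast hune
    rw [padicNorm.eq_zpow_of_nonzero hq1, padicNorm.eq_zpow_of_nonzero hq2]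
    have hℓ0 : (ℓ : ℚ) ≠ 0 := by exact_mod_cast hℓ.ne_zero
    have hℓ1 : (1 : ℚ) ≤ (ℓ : ℚ) := by exact_mod_cast hℓ.one_lt.le
    calc (ℓ : ℚ) ^ (-padicValRat ℓ (P.eval (m : ℚ) - P.eval (n : ℚ)))
        ≤ (ℓ : ℚ) ^ ((d : ℤ) + (-padicValRat ℓ ((m : ℚ) - (n : ℚ)))) := by
          apply zpow_le_zpow_right₀ hℓ1
          omega
      _ = (ℓ : ℚ) ^ d * (ℓ : ℚ) ^ (-padicValRat ℓ ((m : ℚ) - (n : ℚ))) := by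
          rw [zpow_add₀ hℓ0, zpow_natCast]
end

section
/- Let N ∈ ℕ and let m, n ∈ ℕ satisfy ord_ℓ(m − n) ≥ N. Then Q_m(T) − Q_n(T) ∈ 𝔪^N, i.e. (1 − T)^n − (1 − T)^m lies in the N-th power of the maximal ideal (ℓ, T) of ℤ_ℓ[[T]]. Consequently the function ℕ → ℤ_ℓ[[T]], n ↦ Q_n(T), is uniformly continuous when ℕ carries the ℓ-adic metric and ℤ_ℓ[[T]] the 𝔪-adic topology. -/
open PowerSeries

private lemma span_eq_max (ℓ : ℕ) [Fact ℓ.Prime] :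
    Ideal.span {(PowerSeries.C (R := ℤ_[ℓ])) (ℓ : ℤ_[ℓ]), PowerSeries.X} =
      IsLocalRing.maximalIdeal (PowerSeries ℤ_[ℓ]) := by
  ext f
  rw [IsLocalRing.mem_maximalIdeal, mem_nonunits_iff, isUnit_iff_constantCoeff,
    PadicInt.not_isUnit_iff, PadicInt.norm_lt_one_iff_dvd, Ideal.mem_span_pair]
  constructor
  · rintro ⟨u, v, rfl⟩
    simp only [map_add, map_mul, constantCoeff_X, mul_zero, add_zero, constantCoeff_C]
    exact Dvd.dvd.mul_left (dvd_refl _) _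
  · rintro ⟨c, hc⟩
    refine ⟨C (R := ℤ_[ℓ]) c, mk fun p ↦ coeff (R := ℤ_[ℓ]) (p + 1) f, ?_⟩
    have h1 := sub_const_eq_shift_mul_X f
    rw [hc] at h1
    rw [← map_mul, mul_comm c]
    linear_combination -h1

private lemma pow_one_add_mem (ℓ : ℕ) [Fact ℓ.Prime] (j : ℕ)
    {e : PowerSeries ℤ_[ℓ]}
    (he : e ∈ (Ideal.span {(PowerSeries.C (R := ℤ_[ℓ])) (ℓ : ℤ_[ℓ]), PowerSeries.X} : Ideal _) ^ (j + 1)) :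
    (1 + e) ^ ℓ - 1 ∈
      (Ideal.span {(PowerSeries.C (R := ℤ_[ℓ])) (ℓ : ℤ_[ℓ]), PowerSeries.X} : Ideal _) ^ (j + 2) := by
  set I : Ideal (PowerSeries ℤ_[ℓ]) := Ideal.span {(PowerSeries.C (R := ℤ_[ℓ])) (ℓ : ℤ_[ℓ]), PowerSeries.X}
  have hℓp : ℓ.Prime := Fact.out
  have hCmem : (PowerSeries.C (R := ℤ_[ℓ])) (ℓ : ℤ_[ℓ]) ∈ I :=
    Ideal.subset_span (by simp)
  have hsum : (1 + e) ^ ℓ - 1 =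
      ∑ k ∈ Finset.range ℓ, e ^ (k + 1) * (ℓ.choose (k + 1) : PowerSeries ℤ_[ℓ]) := by
    rw [add_comm (1 : PowerSeries ℤ_[ℓ]) e, add_pow]
    rw [Finset.sum_range_succ']
    simp [mul_comm]
  rw [hsum]
  apply Ideal.sum_mem
  intro k hk
  rw [Finset.mem_range] at hk
  rcases eq_or_lt_of_le (Nat.succ_le_of_lt hk) with heq | hlt
  · -- k + 1 = ℓ : term is e^ℓ
    have hmem : e ^ (k + 1) ∈ I ^ ((j + 1) * (k + 1)) := by
      have h2 := Ideal.pow_mem_pow he (k + 1)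
      rwa [← pow_mul] at h2
    have h2 : 2 ≤ k + 1 := by
      have := hℓp.two_le
      omega
    have hle : j + 2 ≤ (j + 1) * (k + 1) := by nlinarith
    exact Ideal.mul_mem_right _ _ (Ideal.pow_le_pow_right hle hmem)
  · -- k + 1 < ℓ : ℓ divides the binomial coefficient
    have hdvd : ℓ ∣ ℓ.choose (k + 1) := hℓp.dvd_choose_self (Nat.succ_ne_zero k) hlt
    obtain ⟨c, hc⟩ := hdvd
    have hcast : (ℓ.choose (k + 1) : PowerSeries ℤ_[ℓ]) =
        (PowerSeries.C (R := ℤ_[ℓ])) (ℓ : ℤ_[ℓ]) * (c : PowerSeries ℤ_[ℓ]) := by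
      rw [hc]; push_cast; rw [← map_natCast (PowerSeries.C (R := ℤ_[ℓ])) ℓ]
    rw [hcast, ← mul_assoc]
    apply Ideal.mul_mem_right
    have he1 : e ^ (k + 1) ∈ I ^ (j + 1) := by
      have h3 : e ^ (k + 1) ∈ (I ^ (j + 1)) ^ (k + 1) := Ideal.pow_mem_pow he _
      rw [← pow_mul] at h3
      exact Ideal.pow_le_pow_right (by nlinarith) h3
    have h4 : e ^ (k + 1) * (PowerSeries.C (R := ℤ_[ℓ])) (ℓ : ℤ_[ℓ]) ∈ I ^ (j + 1) * I :=
      Ideal.mul_mem_mul he1 hCmem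
    rwa [← pow_succ] at h4

private lemma pow_pow_sub_one_mem (ℓ : ℕ) [Fact ℓ.Prime] (j : ℕ) :
    (1 - PowerSeries.X : PowerSeries ℤ_[ℓ]) ^ ℓ ^ j - 1 ∈
      (Ideal.span {(PowerSeries.C (R := ℤ_[ℓ])) (ℓ : ℤ_[ℓ]), PowerSeries.X} : Ideal _) ^ (j + 1) := by
  induction j with
  | zero =>
    simp only [pow_zero, pow_one]
    have h1 : (1 - PowerSeries.X : PowerSeries ℤ_[ℓ]) - 1 = -PowerSeries.X := by ring
    rw [h1]
    rw [pow_one]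
    exact neg_mem (Ideal.subset_span (Set.mem_insert_iff.mpr (Or.inr rfl)))
  | succ j ih =>
    have key := pow_one_add_mem ℓ j ih
    have h1 : (1 : PowerSeries ℤ_[ℓ]) + ((1 - PowerSeries.X) ^ ℓ ^ j - 1)
        = (1 - PowerSeries.X) ^ ℓ ^ j := by ring
    rw [h1] at key
    rwa [← pow_mul, ← pow_succ] at key

private lemma pow_sub_one_mem {R : Type*} [CommRing R] {J : Ideal R} {a : R}
    (ha : a - 1 ∈ J) (k : ℕ) : a ^ k - 1 ∈ J := by
  induction k with
  | zero => simp
  | succ k ih =>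
    have h1 : a ^ (k + 1) - 1 = a ^ k * (a - 1) + (a ^ k - 1) := by ring
    rw [h1]
    exact add_mem (Ideal.mul_mem_left _ _ ha) ih

private lemma key_mem (ℓ : ℕ) [Fact ℓ.Prime] (N : ℕ) {m n : ℕ} (hmn : n ≤ m)
    (h : (ℓ : ℤ) ^ N ∣ (m : ℤ) - (n : ℤ)) :
    (1 - PowerSeries.X : PowerSeries ℤ_[ℓ]) ^ n - (1 - PowerSeries.X) ^ m ∈
      (Ideal.span {(PowerSeries.C (R := ℤ_[ℓ])) (ℓ : ℤ_[ℓ]), PowerSeries.X} : Ideal _) ^ N := by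
  have hdvd : ℓ ^ N ∣ m - n := by
    have h2 : ((ℓ ^ N : ℕ) : ℤ) ∣ ((m - n : ℕ) : ℤ) := by
      push_cast [Nat.cast_sub hmn]
      exact_mod_cast h
    exact_mod_cast h2
  obtain ⟨k, hk⟩ := hdvd
  have hm : m = n + ℓ ^ N * k := by omega
  have hfac : (1 - PowerSeries.X : PowerSeries ℤ_[ℓ]) ^ n - (1 - PowerSeries.X) ^ m
      = -((1 - PowerSeries.X) ^ n * (((1 - PowerSeries.X) ^ ℓ ^ N) ^ k - 1)) := by
    rw [hm, pow_add, pow_mul]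
    ring
  rw [hfac]
  apply neg_mem
  apply Ideal.mul_mem_left
  apply pow_sub_one_mem
  exact Ideal.pow_le_pow_right (by omega) (pow_pow_sub_one_mem ℓ N)

/-- Let `ℓ` be a rational prime, `N ∈ ℕ`, and `m, n ∈ ℕ` with
`ord_ℓ(m − n) ≥ N` (i.e. `ℓ^N ∣ m − n`).  Then `Q_m(T) − Q_n(T) ∈ 𝔪^N`, i.e.
`(1 − T)^n − (1 − T)^m` lies in the `N`-th power of the maximal ideal `𝔪 = (ℓ, T)` of
`ℤ_ℓ[[T]]`.  (This is precisely the quantitative form of the uniform continuity of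
`ℕ → ℤ_ℓ[[T]]`, `n ↦ Q_n(T) = 1 − (1 − T)^n`, from the `ℓ`-adic metric to the
`𝔪`-adic topology.) -/
theorem stmt3 (ℓ : ℕ) [Fact ℓ.Prime] (N : ℕ) (m n : ℕ)
    (h : (ℓ : ℤ) ^ N ∣ (m : ℤ) - (n : ℤ)) :
    Ideal.span {(PowerSeries.C (R := ℤ_[ℓ])) (ℓ : ℤ_[ℓ]), PowerSeries.X} =
      IsLocalRing.maximalIdeal (PowerSeries ℤ_[ℓ]) ∧
    (1 - PowerSeries.X : PowerSeries ℤ_[ℓ]) ^ n - (1 - PowerSeries.X) ^ m ∈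
      (Ideal.span {(PowerSeries.C (R := ℤ_[ℓ])) (ℓ : ℤ_[ℓ]), PowerSeries.X}) ^ N := by
  refine ⟨span_eq_max ℓ, ?_⟩
  rcases le_total n m with hmn | hmn
  · exact key_mem ℓ N hmn h
  · have h2 : (ℓ : ℤ) ^ N ∣ (n : ℤ) - (m : ℤ) := dvd_sub_comm.mp h
    have h3 := key_mem ℓ N hmn h2
    rw [← neg_sub]
    exact neg_mem h3
end

section
/- Let i ≥ 1 and let ξ ∈ K be a primitive ℓ^i-th root of unity with ‖1 − ξ‖ < 1. Then for every a ∈ ℤ_ℓ the series Q_a(1 − ξ) = Σ_{k≥1} e_k(a) (1 − ξ)^k converges in K and equals 1 − ξ^r for any r ∈ ℕ with r ≡ a (mod ℓ^i ℤ_ℓ). -/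
open Filter Topology

set_option maxHeartbeats 800000

private lemma binom_aux {R : Type*} [CommRing R] (t : R) (n : ℕ) :
    ∑ k ∈ Finset.range n, (-1 : R) ^ k * (n.choose (k + 1) : R) * t ^ (k + 1)
      = 1 - (1 - t) ^ n := by
  have h := add_pow (-t) 1 n
  rw [Finset.sum_range_succ'] at h
  simp only [one_pow, mul_one, pow_zero, Nat.choose_zero_right, Nat.cast_one] at h
  have h2 : (1 - t) ^ n = (-t + 1) ^ n := by ring_nf
  rw [h2, h]
  have h3 : ∀ k ∈ Finset.range n, (-t) ^ (k + 1) * (n.choose (k + 1) : R)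
      = -((-1 : R) ^ k * (n.choose (k + 1) : R) * t ^ (k + 1)) := by
    intro k _
    rw [neg_pow]
    ring
  rw [Finset.sum_congr rfl h3, Finset.sum_neg_distrib]
  ring

/-- Let `K` be a complete nonarchimedean normed field which is a
`ℚ_ℓ`-algebra whose structure map is an isometry.  Let `i ≥ 1` and let `ξ ∈ K` be a
primitive `ℓ^i`-th root of unity with `‖1 − ξ‖ < 1`.  Then for every `a ∈ ℤ_ℓ` the series
`Q_a(1 − ξ) = Σ_{k≥1} e_k(a) (1 − ξ)^k` converges in `K` and equals `1 − ξ^r` for any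
`r ∈ ℕ` with `r ≡ a (mod ℓ^i ℤ_ℓ)`.  (Here `e_k : ℤ_ℓ → ℤ_ℓ` denotes the unique
continuous extension of `n ↦ (−1)^{k−1} binom(n,k)`.) -/
theorem stmt6 (ℓ : ℕ) [Fact ℓ.Prime] (K : Type*) [NormedField K] [CompleteSpace K]
    [IsUltrametricDist K] [Algebra ℚ_[ℓ] K]
    (hiso : ∀ q : ℚ_[ℓ], ‖algebraMap ℚ_[ℓ] K q‖ = ‖q‖)
    (e : ℕ → ℤ_[ℓ] → ℤ_[ℓ])
    (he_cont : ∀ k : ℕ, 1 ≤ k → Continuous (e k))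
    (he_nat : ∀ k : ℕ, 1 ≤ k → ∀ n : ℕ,
      e k (n : ℤ_[ℓ]) = (((-1 : ℤ) ^ (k - 1) * (n.choose k : ℤ) : ℤ) : ℤ_[ℓ]))
    (i : ℕ) (hi : 1 ≤ i) (ξ : K) (hξ : IsPrimitiveRoot ξ (ℓ ^ i)) (hnorm : ‖1 - ξ‖ < 1)
    (a : ℤ_[ℓ]) (r : ℕ) (hr : (ℓ : ℤ_[ℓ]) ^ i ∣ ((r : ℤ_[ℓ]) - a)) :
    HasSum (fun k : ℕ => algebraMap ℚ_[ℓ] K ((e (k + 1) a : ℚ_[ℓ])) * (1 - ξ) ^ (k + 1))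
      (1 - ξ ^ r) := by
  have hℓ : (1 : ℕ) < ℓ := (Fact.out : ℓ.Prime).one_lt
  set t : K := 1 - ξ with ht
  set φ : ℚ_[ℓ] →+* K := (algebraMap ℚ_[ℓ] K) with hφ
  have hφiso : Isometry φ := AddMonoidHomClass.isometry_of_norm φ hiso
  set c : ℤ_[ℓ] → ℕ → K := fun x k => φ ((e (k + 1) x : ℚ_[ℓ])) * t ^ (k + 1) with hc
  have hbound : ∀ (k : ℕ) (x : ℤ_[ℓ]), ‖c x k‖ ≤ ‖t‖ ^ (k + 1) := by
    intro k x
    rw [hc]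
    simp only [norm_mul, norm_pow, hiso]
    have h1 : ‖((e (k + 1) x : ℚ_[ℓ]))‖ ≤ 1 := PadicInt.norm_le_one _
    calc ‖((e (k + 1) x : ℚ_[ℓ]))‖ * ‖t‖ ^ (k + 1) ≤ 1 * ‖t‖ ^ (k + 1) :=
          mul_le_mul_of_nonneg_right h1 (pow_nonneg (norm_nonneg _) _)
      _ = ‖t‖ ^ (k + 1) := one_mul _
  have hu : Summable (fun k : ℕ => ‖t‖ ^ (k + 1)) := by
    have := (summable_geometric_of_lt_one (norm_nonneg t) hnorm).mul_left ‖t‖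
    simpa [pow_succ, mul_comm] using this
  have hsum : ∀ x : ℤ_[ℓ], Summable (c x) := fun x =>
    Summable.of_norm_bounded hu (fun k => hbound k x)
  set F : ℤ_[ℓ] → K := fun x => ∑' k, c x k with hF
  have hFcont : Continuous F := by
    refine continuous_tsum (fun k => ?_) hu (fun k x => hbound k x)
    have h1 : Continuous fun x : ℤ_[ℓ] => ((e (k + 1) x : ℚ_[ℓ])) :=
      continuous_subtype_val.comp (he_cont (k + 1) (by omega))
    exact ((hφiso.continuous.comp h1).mul continuous_const)
  -- value at naturals
  have hnatval : ∀ n : ℕ, F (n : ℤ_[ℓ]) = 1 - ξ ^ n := by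
    intro n
    have hcong : ∀ k ∈ Finset.range n, c (n : ℤ_[ℓ]) k
        = (-1 : K) ^ k * (n.choose (k + 1) : K) * t ^ (k + 1) := by
      intro k _
      rw [hc]
      simp only [he_nat (k + 1) (by omega) n, Nat.add_sub_cancel,
        PadicInt.coe_intCast, map_intCast]
      push_cast
      ring
    have hzero : ∀ k ∉ Finset.range n, c (n : ℤ_[ℓ]) k = 0 := by
      intro k hk
      simp only [Finset.mem_range, not_lt] at hk
      have hch : n.choose (k + 1) = 0 := Nat.choose_eq_zero_of_lt (by omega)
      rw [hc]
      simp [he_nat (k + 1) (by omega) n, hch]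
    have hhs : HasSum (c (n : ℤ_[ℓ])) (∑ k ∈ Finset.range n, c (n : ℤ_[ℓ]) k) :=
      hasSum_sum_of_ne_finset_zero hzero
    rw [hF]
    simp only
    rw [hhs.tsum_eq, Finset.sum_congr rfl hcong, binom_aux, ht, sub_sub_cancel]
  -- the approximating sequence
  have happr_dvd : ∀ m : ℕ, (ℓ : ℤ_[ℓ]) ^ m ∣ a - a.appr m := by
    intro m
    have := PadicInt.appr_spec m a
    rwa [Ideal.mem_span_singleton] at this
  have htend : Tendsto (fun m : ℕ => ((a.appr m : ℤ_[ℓ]))) atTop (𝓝 a) := by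
    rw [tendsto_iff_dist_tendsto_zero]
    apply squeeze_zero (fun m => dist_nonneg) (g := fun m => ((ℓ : ℝ)⁻¹) ^ m)
    · intro m
      have h1 : ‖a - a.appr m‖ ≤ (ℓ : ℝ) ^ (-(m : ℤ)) := by
        rw [PadicInt.norm_le_pow_iff_mem_span_pow]
        exact PadicInt.appr_spec m a
      rw [dist_eq_norm, ← norm_neg]
      simp only [neg_sub]
      calc ‖a - a.appr m‖ ≤ (ℓ : ℝ) ^ (-(m : ℤ)) := h1
        _ = ((ℓ : ℝ)⁻¹) ^ m := by
          rw [zpow_neg, inv_pow, zpow_natCast]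
    · apply tendsto_pow_atTop_nhds_zero_of_lt_one (by positivity)
      rw [inv_lt_one_iff₀]
      right
      exact_mod_cast hℓ
  have hxi : ∀ᶠ m in atTop, F ((a.appr m : ℤ_[ℓ])) = 1 - ξ ^ r := by
    filter_upwards [eventually_ge_atTop i] with m hm
    rw [hnatval (a.appr m)]
    congr 1
    have hdvd1 : (ℓ : ℤ_[ℓ]) ^ i ∣ a - a.appr m :=
      dvd_trans (pow_dvd_pow _ hm) (happr_dvd m)
    have hdvd2 : (ℓ : ℤ_[ℓ]) ^ i ∣ ((r : ℤ_[ℓ]) - a.appr m) := by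
      have := dvd_add hr hdvd1
      simpa [sub_add_sub_cancel] using this
    have hdvd3 : (ℓ : ℤ_[ℓ]) ^ i ∣ (((r : ℤ) - (a.appr m : ℤ) : ℤ) : ℤ_[ℓ]) := by
      push_cast
      exact hdvd2
    rw [PadicInt.pow_p_dvd_int_iff] at hdvd3
    have hmod : a.appr m ≡ r [MOD ℓ ^ i] := by
      rw [Nat.modEq_iff_dvd]
      exact_mod_cast hdvd3
    have horder : orderOf ξ = ℓ ^ i := (hξ.eq_orderOf).symm
    have hmod' : a.appr m % ℓ ^ i = r % ℓ ^ i := hmod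
    rw [← pow_mod_orderOf, horder, hmod', ← horder, pow_mod_orderOf]
  have hFa : F a = 1 - ξ ^ r := by
    have h1 : Tendsto (fun m => F ((a.appr m : ℤ_[ℓ]))) atTop (𝓝 (F a)) :=
      (hFcont.continuousAt.tendsto).comp htend
    have hxi' : (fun m => F ((a.appr m : ℤ_[ℓ]))) =ᶠ[atTop] (fun _ => 1 - ξ ^ r) := hxi
    have h2 : Tendsto (fun m => F ((a.appr m : ℤ_[ℓ]))) atTop (𝓝 (1 - ξ ^ r)) :=
      Tendsto.congr' hxi'.symm tendsto_const_nhds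
    exact tendsto_nhds_unique h1 h2
  have hhs : HasSum (c a) (F a) := (hsum a).hasSum
  rw [hFa] at hhs
  exact hhs
end

section
/- Let ℓ be a rational prime, let α : S → ℤ_ℓ be a function with image α(S) = {b_1,…,b_t} (the b_y distinct), and for i,j ∈ {1,…,g} and y ∈ {1,…,t} set γ_ij^{(y)} = #{s ∈ S : o(s)=v_i, t(s)=v_j, α(s)=b_y} and δ_ij^{(y)} = #{s ∈ S : o(s)=v_j, t(s)=v_i, α(s)=b_y}. Let M be the g×g matrix over ℤ[X_1,…,X_t,Y_1,…,Y_t] with M_ij = δ_{ij}·val(v_i) − B_ij − C_ij + Σ_y γ_ij^{(y)} X_y + Σ_y δ_ij^{(y)} Y_y, and let P = det M. Then: (1) P has zero constant term, i.e. P(0,…,0) = 0; and (2) for every k ≥ 1, if ξ ∈ ℂ is a primitive ℓ^k-th root of unity, r_1,…,r_t ∈ ℕ satisfy r_y ≡ b_y (mod ℓ^k ℤ_ℓ), and A_{ψ_k} is the g×g matrix with (A_{ψ_k})_{ij} = Σ_{s ∈ S, o(s)=v_i, t(s)=v_j} ξ^{r_{y(s)}} + Σ_{s ∈ S, o(s)=v_j,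 t(s)=v_i} ξ^{−r_{y(s)}} (where y(s) is the index with α(s) = b_{y(s)}), then det(D − A_{ψ_k}) = P(1 − ξ^{r_1}, …, 1 − ξ^{r_t}, 1 − ξ^{−r_1}, …, 1 − ξ^{−r_t}). -/
/-- The valency of a vertex `w`: the number of chosen directed edges with origin `w`
plus the number with terminus `w`. -/
noncomputable def valency {V S : Type*} [Fintype S] (o t : S → V) (w : V) : ℕ :=
  Nat.card {s : S // o s = w} + Nat.card {s : S // t s = w}

/-- The `g × g` matrix `M` over `ℤ[X_1,…,X_t,Y_1,…,Y_t]` with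
`M_ij = δ_{ij}·val(v_i) − B_ij − C_ij + Σ_y γ_ij^{(y)} X_y + Σ_y δ_ij^{(y)} Y_y`,
where `γ_ij^{(y)} = #{s : o(s)=v_i, t(s)=v_j, α(s)=b_y}` and
`δ_ij^{(y)} = #{s : o(s)=v_j, t(s)=v_i, α(s)=b_y}`.  (The variable `X_y` is
`MvPolynomial.X (Sum.inl y)` and `Y_y` is `MvPolynomial.X (Sum.inr y)`.) -/
noncomputable def Mpoly {V S A : Type*} [Fintype S] (o t : S → V) {g τ : ℕ}
    (v : Fin g → V) (b : Fin τ → A) (α : S → A) :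
    Matrix (Fin g) (Fin g) (MvPolynomial (Fin τ ⊕ Fin τ) ℤ) :=
  Matrix.of fun i j =>
    (if i = j then ((valency o t (v i) : ℕ) : MvPolynomial (Fin τ ⊕ Fin τ) ℤ) else 0) -
    (Nat.card {s : S // o s = v i ∧ t s = v j} : MvPolynomial (Fin τ ⊕ Fin τ) ℤ) -
    (Nat.card {s : S // o s = v j ∧ t s = v i} : MvPolynomial (Fin τ ⊕ Fin τ) ℤ) +
    (∑ z : Fin τ, (Nat.card {s : S // o s = v i ∧ t s = v j ∧ α s = b z} :
        MvPolynomial (Fin τ ⊕ Fin τ) ℤ) * MvPolynomial.X (Sum.inl z)) +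
    (∑ z : Fin τ, (Nat.card {s : S // o s = v j ∧ t s = v i ∧ α s = b z} :
        MvPolynomial (Fin τ ⊕ Fin τ) ℤ) * MvPolynomial.X (Sum.inr z))

/-- The `g × g` complex matrix `A_{ψ_k}` with
`(A_{ψ_k})_{ij} = Σ_{s : o(s)=v_i, t(s)=v_j} ξ^{r_{y(s)}} +
  Σ_{s : o(s)=v_j, t(s)=v_i} ξ^{−r_{y(s)}}`. -/
noncomputable def Apsi {V S : Type*} [Fintype S] [DecidableEq V] (o t : S → V)
    {g τ : ℕ} (v : Fin g → V) (y : S → Fin τ) (r : Fin τ → ℕ) (ξ : ℂ) :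
    Matrix (Fin g) (Fin g) ℂ :=
  Matrix.of fun i j =>
    (∑ s ∈ Finset.univ.filter (fun s => o s = v i ∧ t s = v j), ξ ^ (r (y s))) +
    (∑ s ∈ Finset.univ.filter (fun s => o s = v j ∧ t s = v i), ξ ^ (-(r (y s) : ℤ)))

lemma natCard_eq_filter_card {S : Type*} [Fintype S] (p : S → Prop) [DecidablePred p] :
    Nat.card {s : S // p s} = (Finset.univ.filter p).card := by
  rw [Nat.card_eq_fintype_card, Fintype.card_subtype]

lemma key {S κ R : Type*} [Fintype S] [Fintype κ] [DecidableEq κ] [CommRing R]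
    (q : S → κ) (p : S → Prop) [DecidablePred p] (f : κ → R) :
    ∑ s ∈ Finset.univ.filter p, f (q s)
      = ∑ z, (Nat.card {s : S // p s ∧ q s = z} : R) * f z := by
  rw [← Finset.sum_fiberwise' (Finset.univ.filter p) q f]
  refine Finset.sum_congr rfl fun z _ => ?_
  rw [Finset.sum_const, nsmul_eq_mul, Finset.filter_filter,
    natCard_eq_filter_card (fun s => p s ∧ q s = z)]

lemma key_card {S κ : Type*} [Fintype S] [Fintype κ] [DecidableEq κ]
    (q : S → κ) (p : S → Prop) [DecidablePred p] :
    Nat.card {s : S // p s} = ∑ z, Nat.card {s : S // p s ∧ q s = z} := by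
  have := key (R := ℤ) q p (fun _ => 1)
  simp only [mul_one, Finset.sum_const, Finset.sum_ite_eq] at this
  rw [natCard_eq_filter_card]
  have h2 : ((Finset.univ.filter p).card : ℤ)
      = ((∑ z, Nat.card {s : S // p s ∧ q s = z} : ℕ) : ℤ) := by
    push_cast
    simpa using this
  exact_mod_cast h2

/-- Let `ℓ` be a rational prime, `α : S → ℤ_ℓ` with image
`{b_1,…,b_t}` (the `b_y` distinct), and let `P = det M` where `M` is the matrix `Mpoly`
above.  Then (1) `P` has zero constant term, i.e. `P(0,…,0) = 0`; and (2) for every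
`k ≥ 1`, every primitive `ℓ^k`-th root of unity `ξ ∈ ℂ`, and all `r_1,…,r_t ∈ ℕ` with
`r_y ≡ b_y (mod ℓ^k ℤ_ℓ)`, one has
`det(D − A_{ψ_k}) = P(1 − ξ^{r_1},…,1 − ξ^{r_t}, 1 − ξ^{−r_1},…,1 − ξ^{−r_t})`. -/
theorem stmt15 (ℓ : ℕ) [Fact ℓ.Prime] (g : ℕ) (hg : 1 ≤ g)
    (V : Type*) [DecidableEq V] (S : Type*) [Fintype S] (o t : S → V)
    (v : Fin g → V) (hv : Function.Bijective v)
    (τ : ℕ) (b : Fin τ → ℤ_[ℓ]) (hb : Function.Injective b)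
    (α : S → ℤ_[ℓ]) (y : S → Fin τ) (hy : ∀ s : S, α s = b (y s))
    (hsurj : ∀ z : Fin τ, ∃ s : S, α s = b z) :
    MvPolynomial.eval (fun _ => (0 : ℤ)) (Mpoly o t v b α).det = 0 ∧
    (∀ k : ℕ, 1 ≤ k → ∀ ξ : ℂ, IsPrimitiveRoot ξ (ℓ ^ k) →
      ∀ r : Fin τ → ℕ, (∀ z : Fin τ, (ℓ : ℤ_[ℓ]) ^ k ∣ ((r z : ℤ_[ℓ]) - b z)) →
      (Matrix.diagonal (fun i : Fin g => ((valency o t (v i) : ℕ) : ℂ)) -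
          Apsi o t v y r ξ).det =
        MvPolynomial.aeval
          (Sum.elim (fun z : Fin τ => 1 - ξ ^ (r z))
            (fun z : Fin τ => 1 - ξ ^ (-(r z : ℤ))))
          (Mpoly o t v b α).det) := by
  classical
  set e := Equiv.ofBijective v hv with he
  have hfiber : ∀ (u : S → V) (p : S → Prop) (j : Fin g),
      Nat.card {s : S // p s ∧ e.symm (u s) = j} = Nat.card {s : S // p s ∧ u s = v j} := by
    intro u p j
    refine Nat.card_congr (Equiv.subtypeEquivRight fun s => ?_)
    rw [Equiv.symm_apply_eq]
    exact and_congr_right fun _ => Iff.rfl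
  have hrow : ∀ (u w : S → V) (x : V),
      (∑ j, (Nat.card {s : S // u s = x ∧ w s = v j} : ℤ)) = Nat.card {s : S // u s = x} := by
    intro u w x
    rw [key_card (fun s => e.symm (w s)) (fun s => u s = x)]
    push_cast
    exact Finset.sum_congr rfl fun j _ => by rw [hfiber w (fun s => u s = x) j]
  constructor
  · rw [RingHom.map_det, ← Matrix.exists_mulVec_eq_zero_iff]
    have : Nonempty (Fin g) := ⟨⟨0, hg⟩⟩
    refine ⟨fun _ => 1, ?_, ?_⟩
    · intro h
      exact one_ne_zero (congrFun h (Classical.arbitrary _))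
    · funext i
      simp only [Matrix.mulVec, dotProduct, RingHom.mapMatrix_apply, Matrix.map_apply,
        Mpoly, Matrix.of_apply,
        map_add, map_sub, map_sum, map_mul, map_natCast, MvPolynomial.eval_X, mul_zero,
        Finset.sum_const_zero, add_zero, mul_one, Pi.zero_apply, apply_ite, map_zero]
      rw [Finset.sum_sub_distrib, Finset.sum_sub_distrib, Finset.sum_ite_eq]
      simp only [Finset.mem_univ, if_true]
      rw [hrow o t (v i)]
      have hswap : ∀ j : Fin g, (Nat.card {s : S // o s = v j ∧ t s = v i} : ℤ)
          = (Nat.card {s : S // t s = v i ∧ o s = v j} : ℤ) := fun j => by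
        rw [Nat.card_congr (Equiv.subtypeEquivRight fun s => and_comm)]
      simp_rw [hswap]
      rw [hrow t o (v i)]
      unfold valency
      push_cast
      ring
  · intro k hk ξ hξ r hr
    rw [AlgHom.map_det]
    refine congrArg Matrix.det ?_
    ext i j
    have hγ : ∀ (w u : V) (z : Fin τ),
        Nat.card {s : S // o s = w ∧ t s = u ∧ α s = b z}
          = Nat.card {s : S // (o s = w ∧ t s = u) ∧ y s = z} := by
      intro w u z
      exact Nat.card_congr (Equiv.subtypeEquivRight fun s => by
        rw [hy s, hb.eq_iff, and_assoc])
    simp only [AlgHom.mapMatrix_apply, Matrix.map_apply, Mpoly, Matrix.of_apply,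
      Matrix.sub_apply, Matrix.diagonal_apply, Apsi, map_add, map_sub, map_sum, map_mul,
      map_natCast, MvPolynomial.aeval_X, Sum.elim_inl, Sum.elim_inr, apply_ite, map_zero]
    simp_rw [hγ]
    rw [key y (fun s => o s = v i ∧ t s = v j) (fun z => ξ ^ (r z)),
      key y (fun s => o s = v j ∧ t s = v i) (fun z => ξ ^ (-(r z : ℤ)))]
    have hB : (Nat.card {s : S // o s = v i ∧ t s = v j} : ℂ)
        = ∑ z, (Nat.card {s : S // (o s = v i ∧ t s = v j) ∧ y s = z} : ℂ) := by
      rw [key_card y (fun s => o s = v i ∧ t s = v j)]; push_cast; rfl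
    have hC : (Nat.card {s : S // o s = v j ∧ t s = v i} : ℂ)
        = ∑ z, (Nat.card {s : S // (o s = v j ∧ t s = v i) ∧ y s = z} : ℂ) := by
      rw [key_card y (fun s => o s = v j ∧ t s = v i)]; push_cast; rfl
    rw [hB, hC]
    simp_rw [mul_one_sub]
    rw [Finset.sum_sub_distrib, Finset.sum_sub_distrib]
    ring
end
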